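/- Let H be a real inner product space, κ, B > 0, vectors φ_1,…,φ_n ∈ H with ‖φ_t‖ ≤ κ, and θ_1,…,θ_n ∈ H with ‖θ_t‖ ≤ B. Suppose 1 = t_1 < ⋯ < t_{m+1} = n+1 satisfy Σ_{t=t_j}^{t_{j+1}−2} ‖θ_t − θ_{t+1}‖ ≤ C/m for each j, and set θ̄_t := (1/(t_{j+1}−t_j)) Σ_{s=t_j}^{t_{j+1}−1} θ_s for t_j ≤ t < t_{j+1}. Then Σ_{t=1}^n ⟨θ̄_t − θ_t, φ_t⟩² ≤ κ² n (C/m)² + 4 κ² B² m. -/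

import Mathlib

/-! Each θ̄_t is the average of θ over the block containing t, and on that block θ moves by at
most its total variation C/m, so the average lies in the closed ball of radius C/m around θ_t.
Cauchy–Schwarz then bounds every summand by κ²(C/m)². -/

open Finset

theorem exists_mem_Ico_of_mem_Ico (t : ℕ → ℕ) {s : ℕ} :
    ∀ m : ℕ, t 1 ≤ s → s < t (m + 1) → ∃ j ∈ Icc 1 m, s ∈ Ico (t j) (t (j + 1))
  | 0, h₁, h₂ => absurd h₂ (not_lt.2 h₁)
  | m + 1, h₁, h₂ => by
    by_cases hs : s < t (m + 1)
    · obtain ⟨j, hj, hsj⟩ := exists_mem_Ico_of_mem_Ico t m h₁ hs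
      exact ⟨j, Icc_subset_Icc_right m.le_succ hj, hsj⟩
    · exact ⟨m + 1, by simp, mem_Ico.2 ⟨not_lt.1 hs, h₂⟩⟩

section Normed

variable {E : Type*} [NormedAddCommGroup E]

theorem norm_sub_le_sum_Ico_pred (θ : ℕ → E) {a b u s : ℕ} (hu : u ∈ Ico a b) (hs : s ∈ Ico a b) :
    ‖θ u - θ s‖ ≤ ∑ v ∈ Ico a (b - 1), ‖θ v - θ (v + 1)‖ := by
  wlog hus : u ≤ s generalizing u s
  · rw [norm_sub_rev]
    exact this hs hu (le_of_not_ge hus)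
  simp only [← dist_eq_norm]
  refine (dist_le_Ico_sum_dist θ hus).trans <|
    sum_le_sum_of_subset_of_nonneg (Ico_subset_Ico (mem_Ico.1 hu).1 ?_) fun _ _ _ => dist_nonneg
  have := (mem_Ico.1 hs).2
  omega

theorem norm_average_sub_le [NormedSpace ℝ E] {ι : Type*} {S : Finset ι} (hS : S.Nonempty)
    (f : ι → E) {x : E} {δ : ℝ} (hf : ∀ u ∈ S, ‖f u - x‖ ≤ δ) :
    ‖(#S : ℝ)⁻¹ • ∑ u ∈ S, f u - x‖ ≤ δ := by
  have hweights : ∑ _u ∈ S, (#S : ℝ)⁻¹ = 1 := by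
    rw [sum_const, nsmul_eq_mul, mul_inv_cancel₀ (by exact_mod_cast hS.card_ne_zero)]
  rw [← mem_closedBall_iff_norm, smul_sum]
  exact (convex_closedBall x δ).sum_mem (fun _ _ => by positivity) hweights
    fun u hu => mem_closedBall_iff_norm.2 (hf u hu)

theorem norm_blockAverage_sub_le [NormedSpace ℝ E] (θ : ℕ → E) {a b s : ℕ} (hs : s ∈ Ico a b) :
    ‖(1 / ((b : ℝ) - a)) • ∑ u ∈ Ico a b, θ u - θ s‖
      ≤ ∑ v ∈ Ico a (b - 1), ‖θ v - θ (v + 1)‖ := by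
  have hcard : (1 / ((b : ℝ) - a)) = (#(Ico a b) : ℝ)⁻¹ := by
    rw [Nat.card_Ico, Nat.cast_sub ((mem_Ico.1 hs).1.trans (mem_Ico.1 hs).2.le), one_div]
  rw [hcard]
  exact norm_average_sub_le ⟨s, hs⟩ θ fun u hu => norm_sub_le_sum_Ico_pred θ hu hs

end Normed

theorem inner_sq_le_of_norm_le {F : Type*} [NormedAddCommGroup F] [InnerProductSpace ℝ F]
    {x y : F} {δ κ : ℝ} (hx : ‖x‖ ≤ δ) (hy : ‖y‖ ≤ κ) :
    (inner ℝ x y : ℝ) ^ 2 ≤ κ ^ 2 * δ ^ 2 := by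
  rw [← sq_abs, mul_comm, ← mul_pow]
  have hCS : |(inner ℝ x y : ℝ)| ≤ δ * κ :=
    (abs_real_inner_le_norm x y).trans (mul_le_mul hx hy (norm_nonneg y) ((norm_nonneg x).trans hx))
  exact pow_le_pow_left₀ (abs_nonneg _) hCS 2

theorem restart_approx_error_rkhs_general {H : Type*} [NormedAddCommGroup H] [InnerProductSpace ℝ H]
    (n m : ℕ) (κ B C : ℝ)
    (φ θ θbar : ℕ → H) (t : ℕ → ℕ)
    (hφ : ∀ s ∈ Finset.Icc 1 n, ‖φ s‖ ≤ κ)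
    (ht1 : t 1 = 1) (htm : t (m + 1) = n + 1)
    (hTV : ∀ j ∈ Finset.Icc 1 m,
      ∑ s ∈ Finset.Ico (t j) (t (j + 1) - 1), ‖θ s - θ (s + 1)‖ ≤ C / m)
    (hbar : ∀ j ∈ Finset.Icc 1 m, ∀ s ∈ Finset.Ico (t j) (t (j + 1)),
      θbar s = (1 / ((t (j + 1) : ℝ) - t j)) • ∑ u ∈ Finset.Ico (t j) (t (j + 1)), θ u) :
    ∑ s ∈ Finset.Icc 1 n, (inner ℝ (θbar s - θ s) (φ s) : ℝ) ^ 2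
      ≤ κ ^ 2 * n * (C / m) ^ 2 + 4 * κ ^ 2 * B ^ 2 * m := by
  have hterm : ∀ s ∈ Icc 1 n, (inner ℝ (θbar s - θ s) (φ s) : ℝ) ^ 2 ≤ κ ^ 2 * (C / m) ^ 2 := by
    intro s hs
    obtain ⟨hs₁, hsn⟩ := mem_Icc.1 hs
    obtain ⟨j, hj, hsj⟩ :=
      exists_mem_Ico_of_mem_Ico t (s := s) m (by rwa [ht1]) (by rw [htm]; omega)
    refine inner_sq_le_of_norm_le ?_ (hφ s hs)
    rw [hbar j hj s hsj]
    exact (norm_blockAverage_sub_le θ hsj).trans (hTV j hj)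
  calc ∑ s ∈ Icc 1 n, (inner ℝ (θbar s - θ s) (φ s) : ℝ) ^ 2
      ≤ ∑ _s ∈ Icc 1 n, κ ^ 2 * (C / m) ^ 2 := sum_le_sum hterm
    _ = κ ^ 2 * n * (C / m) ^ 2 := by
      simp only [sum_const, Nat.card_Icc, nsmul_eq_mul]; push_cast; ring
    _ ≤ κ ^ 2 * n * (C / m) ^ 2 + 4 * κ ^ 2 * B ^ 2 * m := le_add_of_nonneg_right (by positivity)

theorem restart_approx_error_rkhs {H : Type*} [NormedAddCommGroup H] [InnerProductSpace ℝ H]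
    (n m : ℕ) (κ B C : ℝ)
    (hκ : 0 < κ) (hB : 0 < B) (hm : 1 ≤ m)
    (φ θ θbar : ℕ → H) (t : ℕ → ℕ)
    (hφ : ∀ s ∈ Finset.Icc 1 n, ‖φ s‖ ≤ κ)
    (hθ : ∀ s ∈ Finset.Icc 1 n, ‖θ s‖ ≤ B)
    (ht1 : t 1 = 1) (htm : t (m + 1) = n + 1)
    (hmono : ∀ j ∈ Finset.Icc 1 m, t j < t (j + 1))
    (hTV : ∀ j ∈ Finset.Icc 1 m,
      ∑ s ∈ Finset.Ico (t j) (t (j + 1) - 1), ‖θ s - θ (s + 1)‖ ≤ C / m)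
    (hbar : ∀ j ∈ Finset.Icc 1 m, ∀ s ∈ Finset.Ico (t j) (t (j + 1)),
      θbar s = (1 / ((t (j + 1) : ℝ) - t j)) • ∑ u ∈ Finset.Ico (t j) (t (j + 1)), θ u) :
    ∑ s ∈ Finset.Icc 1 n, (inner ℝ (θbar s - θ s) (φ s) : ℝ) ^ 2
      ≤ κ ^ 2 * n * (C / m) ^ 2 + 4 * κ ^ 2 * B ^ 2 * m :=
  restart_approx_error_rkhs_general n m κ B C φ θ θbar t hφ ht1 htm hTV hbar
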